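/- arXiv:2202.13104 — 2 statements merged into one kernel-verified Lean document; each statement's English description precedes it below -/
import Mathlib

section
/- For every real x with 0 < x < 1, the payoff difference in the bribery game equals the payoff difference in the IPGG shifted by the bribery term: f̄_C(x) − f̄_D(x) = (f_C(x) − f_D(x)) + ((N−1)/N)·γ·h·(q−p). -/
/-- IPGG payoff of a focal cooperator when k of the other N−1 group members cooperate. -/
noncomputable def piC (N : ℕ) (b c τ β rp α F : ℝ) (k : ℕ) : ℝ :=
  b + F * c * ((k : ℝ) + 1) / N - c - τ -
    α * β * τ * rp * ((if 1 ≤ k then (1 : ℝ) else 0) + ((N : ℝ) - 1 - k) / ((k : ℝ) + 1))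

/-- IPGG payoff of a focal defector when k of the other N−1 group members cooperate. -/
noncomputable def piD (N : ℕ) (b c τ β rp α F : ℝ) (k : ℕ) : ℝ :=
  b + F * c * (k : ℝ) / N - τ -
    (1 - α) * β * τ * rp * ((k : ℝ) / ((N : ℝ) - k) + (if k ≤ N - 2 then (1 : ℝ) else 0))

/-- Bribery-game payoff of a focal cooperator. -/
noncomputable def piCbar (N : ℕ) (b c τ β rp α F h γ p q : ℝ) (k : ℕ) : ℝ :=
  piC N b c τ β rp α F k - ((N : ℝ) - 1) / N * p * γ * h
    + γ * h / N * (p * k + q * ((N : ℝ) - 1 - k))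

/-- Bribery-game payoff of a focal defector. -/
noncomputable def piDbar (N : ℕ) (b c τ β rp α F h γ p q : ℝ) (k : ℕ) : ℝ :=
  piD N b c τ β rp α F k - ((N : ℝ) - 1) / N * q * γ * h
    + γ * h / N * (p * k + q * ((N : ℝ) - 1 - k))

/-- Binomial average of a payoff function at cooperator frequency x. -/
noncomputable def avgPayoff (N : ℕ) (π : ℕ → ℝ) (x : ℝ) : ℝ :=
  ∑ k ∈ Finset.range N, ((N - 1).choose k : ℝ) * x ^ k * (1 - x) ^ (N - 1 - k) * π k

/-!
The bribe income γh/N·(pk + q(N−1−k)) is the same for a cooperator and a defector, so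
π̄_C − π̄_D = π_C − π_D + ((N−1)/N)·γ·h·(q−p) pointwise in k. Averaging is linear and the
binomial weights sum to 1, so the constant shift passes through the average unchanged.
-/

open Finset

lemma sum_range_choose_mul_pow_mul_one_sub_pow {R : Type*} [CommRing R] (n : ℕ) (x : R) :
    ∑ k ∈ range (n + 1), (n.choose k : R) * x ^ k * (1 - x) ^ (n - k) = 1 := by
  calc ∑ k ∈ range (n + 1), (n.choose k : R) * x ^ k * (1 - x) ^ (n - k)
      = (x + (1 - x)) ^ n := by rw [add_pow]; exact sum_congr rfl fun k _ => by ring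
    _ = 1 := by rw [add_sub_cancel, one_pow]

lemma avgPayoff_sub (N : ℕ) (f g : ℕ → ℝ) (x : ℝ) :
    avgPayoff N f x - avgPayoff N g x = avgPayoff N (fun k => f k - g k) x := by
  simp only [avgPayoff, ← sum_sub_distrib, mul_sub]

lemma avgPayoff_add_const {N : ℕ} (hN : N ≠ 0) (f : ℕ → ℝ) (a x : ℝ) :
    avgPayoff N (fun k => f k + a) x = avgPayoff N f x + a := by
  obtain ⟨n, rfl⟩ := Nat.exists_eq_succ_of_ne_zero hN
  have hweights := sum_range_choose_mul_pow_mul_one_sub_pow n x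
  simp only [avgPayoff, Nat.succ_sub_one, mul_add, sum_add_distrib, ← sum_mul, hweights, one_mul]

lemma piCbar_sub_piDbar (N : ℕ) (b c τ β rp α F h γ p q : ℝ) (k : ℕ) :
    piCbar N b c τ β rp α F h γ p q k - piDbar N b c τ β rp α F h γ p q k
      = piC N b c τ β rp α F k - piD N b c τ β rp α F k + ((N : ℝ) - 1) / N * γ * h * (q - p) := by
  unfold piCbar piDbar
  ring

theorem bg_payoff_difference_shift_general (N : ℕ) (hN : 2 ≤ N) (b c τ β rp α F h γ p q : ℝ)
    (x : ℝ) :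
    avgPayoff N (piCbar N b c τ β rp α F h γ p q) x
      - avgPayoff N (piDbar N b c τ β rp α F h γ p q) x
      = (avgPayoff N (piC N b c τ β rp α F) x - avgPayoff N (piD N b c τ β rp α F) x)
        + ((N : ℝ) - 1) / N * γ * h * (q - p) := by
  simp only [avgPayoff_sub, piCbar_sub_piDbar]
  exact avgPayoff_add_const (by omega) _ _ x

/-- For x ∈ (0,1), the payoff difference in the bribery game equals the payoff
difference in the IPGG shifted by the bribery term:
f̄_C(x) − f̄_D(x) = (f_C(x) − f_D(x)) + ((N−1)/N)·γ·h·(q−p). -/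
theorem bg_payoff_difference_shift (N : ℕ) (hN : 2 ≤ N) (b c τ β rp α F h γ p q : ℝ)
    (hc : 0 < c) (hτ : 0 < τ) (hβ : 0 < β) (hrp : 0 < rp) (hα0 : 0 ≤ α) (hα1 : α ≤ 1)
    (hh : 0 < h) (hγ0 : 0 < γ) (hγ1 : γ ≤ 1) (hp0 : 0 ≤ p) (hp1 : p ≤ 1)
    (hq0 : 0 ≤ q) (hq1 : q ≤ 1)
    (x : ℝ) (hx : 0 < x) (hx1 : x < 1) :
    avgPayoff N (piCbar N b c τ β rp α F h γ p q) x
      - avgPayoff N (piDbar N b c τ β rp α F h γ p q) x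
      = (avgPayoff N (piC N b c τ β rp α F) x - avgPayoff N (piD N b c τ β rp α F) x)
        + ((N : ℝ) - 1) / N * γ * h * (q - p) :=
  bg_payoff_difference_shift_general N hN b c τ β rp α F h γ p q x
end

section
/- Suppose cooperators are more inclined to bribe than defectors, i.e., p > q. Then corruption raises both cooperation thresholds, F̄_min > F_min and F̄_max > F_max; moreover, if F̄_min < F < F_max and x*_Q, x*_Q̄ ∈ (0,1) are the unique zeros of Q and Q̄ respectively, then x*_Q < x*_Q̄. (Hence corruption shrinks the basin of attraction of full cooperation when cooperators are more inclined to offer bribes.) -/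
/-- The IPGG gradient function Q. -/
noncomputable def Qipgg (N : ℕ) (c τ β rp α F : ℝ) (x : ℝ) : ℝ :=
  F * c / N - c - 2 * α * β * τ * rp + β * τ * rp
    - α * β * τ * rp * (∑ k ∈ Finset.range (N - 1), (1 - x) ^ (k + 1))
    + (1 - α) * β * τ * rp * (∑ k ∈ Finset.range (N - 1), x ^ (k + 1))

/-- The lower threshold F_min for the pool multiplier in the IPGG. -/
noncomputable def Fmin (N : ℕ) (c τ β rp α : ℝ) : ℝ :=
  N * (c - β * τ * rp + 2 * α * β * τ * rp - (1 - α) * β * τ * rp * ((N : ℝ) - 1)) / c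

/-- The upper threshold F_max for the pool multiplier in the IPGG. -/
noncomputable def Fmax (N : ℕ) (c τ β rp α : ℝ) : ℝ :=
  N * (c - β * τ * rp + α * β * τ * rp * ((N : ℝ) + 1)) / c

/-- The bribery-game gradient function Q̄(x) = Q(x) + ((N−1)/N)·γ·h·(q−p). -/
noncomputable def Qbar (N : ℕ) (c τ β rp α F h γ p q : ℝ) (x : ℝ) : ℝ :=
  Qipgg N c τ β rp α F x + ((N : ℝ) - 1) / N * γ * h * (q - p)

/-- The lower threshold F̄_min = F_min − (N−1)·γ·h·(q−p)/c for the bribery game. -/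
noncomputable def Fbarmin (N : ℕ) (c τ β rp α h γ p q : ℝ) : ℝ :=
  Fmin N c τ β rp α - ((N : ℝ) - 1) * γ * h * (q - p) / c

/-- The upper threshold F̄_max = F_max − (N−1)·γ·h·(q−p)/c for the bribery game. -/
noncomputable def Fbarmax (N : ℕ) (c τ β rp α h γ p q : ℝ) : ℝ :=
  Fmax N c τ β rp α - ((N : ℝ) - 1) * γ * h * (q - p) / c

/- Both thresholds move up by (N−1)γh(p−q)/c > 0. Since Q is nondecreasing on [0,1] and bribery
lowers it by the positive constant ((N−1)/N)γh(p−q), the interior zero of Q̄ cannot lie at or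
left of the zero of Q: there Q̄ ≤ Q(x*_Q) − (positive) < 0. -/

open Finset

lemma monotoneOn_sum_range_pow_succ (n : ℕ) :
    MonotoneOn (fun x : ℝ => ∑ k ∈ range n, x ^ (k + 1)) (Set.Ici 0) :=
  fun _ hx _ _ hxy => sum_le_sum fun _ _ => pow_le_pow_left₀ hx hxy _

lemma Qipgg_monotoneOn (N : ℕ) {c τ β rp α : ℝ} (F : ℝ) (hτ : 0 < τ) (hβ : 0 < β) (hrp : 0 < rp)
    (hα0 : 0 ≤ α) (hα1 : α ≤ 1) :
    MonotoneOn (Qipgg N c τ β rp α F) (Set.Icc 0 1) := by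
  intro x ⟨hx0, _⟩ y ⟨_, hy1⟩ hxy
  have hdef : 0 ≤ α * β * τ * rp := by positivity
  have hcoop : 0 ≤ (1 - α) * β * τ * rp := by
    have : 0 ≤ 1 - α := sub_nonneg.2 hα1
    positivity
  have hS := monotoneOn_sum_range_pow_succ (N - 1)
  have hdefSum := hS (Set.mem_Ici.2 (sub_nonneg.2 hy1)) (Set.mem_Ici.2 (by linarith))
    (sub_le_sub_left hxy 1)
  have hcoopSum := hS (Set.mem_Ici.2 hx0) (Set.mem_Ici.2 (hx0.trans hxy)) hxy
  unfold Qipgg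
  linarith [mul_le_mul_of_nonneg_left hdefSum hdef, mul_le_mul_of_nonneg_left hcoopSum hcoop]

section Bribery

variable {N : ℕ} {c γ h p q : ℝ}

lemma bribery_threshold_shift_neg (hN : 2 ≤ N) (hc : 0 < c) (hγ : 0 < γ) (hh : 0 < h)
    (hpq : q < p) : ((N : ℝ) - 1) * γ * h * (q - p) / c < 0 := by
  have hN1 : (0 : ℝ) < N - 1 := by
    rw [sub_pos]
    exact_mod_cast hN
  exact div_neg_of_neg_of_pos (mul_neg_of_pos_of_neg (by positivity) (sub_neg.2 hpq)) hc

lemma Fmin_lt_Fbarmin (τ β rp α : ℝ) (hN : 2 ≤ N) (hc : 0 < c) (hγ : 0 < γ) (hh : 0 < h)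
    (hpq : q < p) : Fmin N c τ β rp α < Fbarmin N c τ β rp α h γ p q := by
  unfold Fbarmin
  linarith [bribery_threshold_shift_neg hN hc hγ hh hpq]

lemma Fmax_lt_Fbarmax (τ β rp α : ℝ) (hN : 2 ≤ N) (hc : 0 < c) (hγ : 0 < γ) (hh : 0 < h)
    (hpq : q < p) : Fmax N c τ β rp α < Fbarmax N c τ β rp α h γ p q := by
  unfold Fbarmax
  linarith [bribery_threshold_shift_neg hN hc hγ hh hpq]

lemma Qbar_lt_Qipgg (τ β rp α F x : ℝ) (hN : 2 ≤ N) (hγ : 0 < γ) (hh : 0 < h) (hpq : q < p) :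
    Qbar N c τ β rp α F h γ p q x < Qipgg N c τ β rp α F x := by
  have hN1 : (0 : ℝ) < N - 1 := by
    rw [sub_pos]
    exact_mod_cast hN
  have hshift : ((N : ℝ) - 1) / N * γ * h * (q - p) < 0 :=
    mul_neg_of_pos_of_neg (by positivity) (sub_neg.2 hpq)
  exact add_lt_of_neg_right _ hshift

end Bribery

lemma MonotoneOn.lt_of_apply_eq_of_lt {α β : Type*} [LinearOrder α] [Preorder β] {f g : α → β}
    {s : Set α} (hf : MonotoneOn f s) (hgf : ∀ x ∈ s, g x < f x) {a b : α} (ha : a ∈ s)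
    (hb : b ∈ s) (hab : f a = g b) : a < b := by
  by_contra! hba
  exact (hgf b hb).not_ge (hab ▸ hf hb ha hba)

theorem bg_corruption_hinders_cooperation_general (N : ℕ) (hN : 2 ≤ N) (c τ β rp α h γ p q : ℝ)
    (hc : 0 < c) (hτ : 0 < τ) (hβ : 0 < β) (hrp : 0 < rp) (hα0 : 0 ≤ α) (hα1 : α ≤ 1)
    (hh : 0 < h) (hγ0 : 0 < γ) (hpq : q < p) :
    Fmin N c τ β rp α < Fbarmin N c τ β rp α h γ p q ∧
    Fmax N c τ β rp α < Fbarmax N c τ β rp α h γ p q ∧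
    ∀ F xQ xQb : ℝ,
      Fbarmin N c τ β rp α h γ p q < F → F < Fmax N c τ β rp α →
      0 < xQ → xQ < 1 → Qipgg N c τ β rp α F xQ = 0 →
      (∀ y : ℝ, 0 < y → y < 1 → Qipgg N c τ β rp α F y = 0 → y = xQ) →
      0 < xQb → xQb < 1 → Qbar N c τ β rp α F h γ p q xQb = 0 →
      (∀ y : ℝ, 0 < y → y < 1 → Qbar N c τ β rp α F h γ p q y = 0 → y = xQb) →
      xQ < xQb := by
  refine ⟨Fmin_lt_Fbarmin τ β rp α hN hc hγ0 hh hpq, Fmax_lt_Fbarmax τ β rp α hN hc hγ0 hh hpq, ?_⟩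
  intro F xQ xQb _ _ hxQ0 hxQ1 hQ _ hxQb0 hxQb1 hQb _
  exact (Qipgg_monotoneOn N F hτ hβ hrp hα0 hα1).lt_of_apply_eq_of_lt
    (fun x _ => Qbar_lt_Qipgg τ β rp α F x hN hγ0 hh hpq) ⟨hxQ0.le, hxQ1.le⟩ ⟨hxQb0.le, hxQb1.le⟩
    (hQ.trans hQb.symm)

/-- If cooperators are more inclined to bribe than defectors (p > q), then corruption
raises both cooperation thresholds, F̄_min > F_min and F̄_max > F_max; moreover, if
F̄_min < F < F_max and x*_Q, x*_Q̄ ∈ (0,1) are the unique zeros of Q and Q̄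
respectively, then x*_Q < x*_Q̄: corruption shrinks the basin of attraction of
full cooperation. -/
theorem bg_corruption_hinders_cooperation (N : ℕ) (hN : 2 ≤ N) (c τ β rp α h γ p q : ℝ)
    (hc : 0 < c) (hτ : 0 < τ) (hβ : 0 < β) (hrp : 0 < rp) (hα0 : 0 ≤ α) (hα1 : α ≤ 1)
    (hh : 0 < h) (hγ0 : 0 < γ) (hγ1 : γ ≤ 1) (hp0 : 0 ≤ p) (hp1 : p ≤ 1)
    (hq0 : 0 ≤ q) (hq1 : q ≤ 1) (hpq : q < p) :
    Fmin N c τ β rp α < Fbarmin N c τ β rp α h γ p q ∧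
    Fmax N c τ β rp α < Fbarmax N c τ β rp α h γ p q ∧
    ∀ F xQ xQb : ℝ,
      Fbarmin N c τ β rp α h γ p q < F → F < Fmax N c τ β rp α →
      0 < xQ → xQ < 1 → Qipgg N c τ β rp α F xQ = 0 →
      (∀ y : ℝ, 0 < y → y < 1 → Qipgg N c τ β rp α F y = 0 → y = xQ) →
      0 < xQb → xQb < 1 → Qbar N c τ β rp α F h γ p q xQb = 0 →
      (∀ y : ℝ, 0 < y → y < 1 → Qbar N c τ β rp α F h γ p q y = 0 → y = xQb) →
      xQ < xQb :=
  bg_corruption_hinders_cooperation_general N hN c τ β rp α h γ p q hc hτ hβ hrp hα0 hα1 hh hγ0 hpq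
end
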